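/- Let s₁ ≥ s₂ ≥ ⋯ ≥ s_p > 0 and y > 0 with y ≠ 1 (and such that 1/y is in the range of ω ↦ (1/p)∑ᵢ sᵢ/(sᵢ - ω) restricted to a suitable interval). For the rational function ψ(ω) = (1/p)∑_{i=1}^p sᵢ/(sᵢ - ω), the function g(ω) = (1/(s_j - ω))·(1 - (1/n)∑_k s_k²/(s_k - ω)²)/(1 - (1/n)∑_k s_k/(s_k - ω)) has, at the simple pole ω = s_j (assuming s_j is a simple eigenvalue distinct from all other s_k), residue equal to -n·(1 - (1/n)∑_{k≠j} s_k/(s_k - s_j)). -/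

import Mathlib

open Filter Topology

set_option maxHeartbeats 1600000 in
/-- Residue of `g(ω) = (1/(s_j - ω)) (1 - (1/n) ∑ₖ s_k²/(s_k-ω)²)/(1 - (1/n) ∑ₖ s_k/(s_k-ω))`
at the pole `ω = s_j`, computed via the derivative formula for poles of order at most two:
it equals `-n (1 - (1/n) ∑_{k ≠ j} s_k/(s_k - s_j))`. -/
theorem residue_at_eigenvalue {p n : ℕ} (hn : 0 < n) (s : Fin p → ℝ)
    (hpos : ∀ i, 0 < s i) (hdist : Function.Injective s) (j : Fin p)
    (g : ℝ → ℝ)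
    (hg : ∀ ω : ℝ, g ω = (1 / (s j - ω)) *
        ((1 - (1 / (n : ℝ)) * ∑ k, (s k) ^ 2 / (s k - ω) ^ 2) /
          (1 - (1 / (n : ℝ)) * ∑ k, s k / (s k - ω)))) :
    Tendsto (deriv fun ω : ℝ => (ω - s j) ^ 2 * g ω) (nhdsWithin (s j) {s j}ᶜ)
      (nhds (-(n : ℝ) * (1 - (1 / (n : ℝ)) * ∑ k ∈ Finset.univ.erase j, s k / (s k - s j)))) := by
  have hn' : (n : ℝ) ≠ 0 := Nat.cast_ne_zero.mpr hn.ne'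
  set a := s j with ha
  have haa : a ≠ 0 := (hpos j).ne'
  set A : ℝ → ℝ := fun ω => 1 - (1/(n:ℝ)) * ∑ k ∈ Finset.univ.erase j, (s k)^2/(s k - ω)^2
    with hA
  set B : ℝ → ℝ := fun ω => 1 - (1/(n:ℝ)) * ∑ k ∈ Finset.univ.erase j, s k/(s k - ω) with hB
  set P : ℝ → ℝ := fun ω => (n:ℝ) * (a - ω)^2 * A ω - a^2 with hP
  set Q : ℝ → ℝ := fun ω => (n:ℝ) * (a - ω) * B ω - a with hQ
  set F : ℝ → ℝ := fun ω => P ω / Q ω with hF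
  -- the open set where the off-`j` denominators don't vanish
  set V : Set ℝ := ⋂ k ∈ Finset.univ.erase j, {s k}ᶜ with hV
  have hVopen : IsOpen V := isOpen_biInter_finset fun k _ => isOpen_compl_singleton
  have hVmem : ∀ ω ∈ V, ∀ k ∈ Finset.univ.erase j, s k - ω ≠ 0 := by
    intro ω hω k hk
    have : ω ∈ ({s k}ᶜ : Set ℝ) := by
      have := Set.mem_iInter₂.mp hω k hk
      exact this
    exact sub_ne_zero.mpr (fun h => this (by simp [h.symm]))
  have haV : a ∈ V := by
    refine Set.mem_iInter₂.mpr fun k hk => ?_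
    have hkj : k ≠ j := (Finset.mem_erase.mp hk).1
    simp only [Set.mem_compl_iff, Set.mem_singleton_iff]
    exact fun h => hkj (hdist h.symm)
  -- smoothness of A, B, Q on V
  have hAc : ContDiffOn ℝ (⊤ : ℕ∞) A V := by
    apply ContDiffOn.sub contDiffOn_const
    apply ContDiffOn.mul contDiffOn_const
    apply ContDiffOn.sum
    intro k hk
    exact ContDiffOn.div contDiffOn_const
      ((contDiffOn_const.sub contDiffOn_id).pow 2)
      (fun x hx => pow_ne_zero 2 (hVmem x hx k hk))
  have hBc : ContDiffOn ℝ (⊤ : ℕ∞) B V := by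
    apply ContDiffOn.sub contDiffOn_const
    apply ContDiffOn.mul contDiffOn_const
    apply ContDiffOn.sum
    intro k hk
    exact ContDiffOn.div contDiffOn_const (contDiffOn_const.sub contDiffOn_id)
      (fun x hx => hVmem x hx k hk)
  have hPc : ContDiffOn ℝ (⊤ : ℕ∞) P V :=
    ((contDiffOn_const.mul ((contDiffOn_const.sub contDiffOn_id).pow 2)).mul hAc).sub
      contDiffOn_const
  have hQc : ContDiffOn ℝ (⊤ : ℕ∞) Q V :=
    ((contDiffOn_const.mul (contDiffOn_const.sub contDiffOn_id)).mul hBc).sub contDiffOn_const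
  -- the open set where additionally Q ≠ 0
  set U : Set ℝ := V ∩ Q ⁻¹' ({0}ᶜ) with hU
  have hUopen : IsOpen U :=
    hQc.continuousOn.isOpen_inter_preimage hVopen isOpen_compl_singleton
  have hQa : Q a = -a := by simp [hQ]
  have haU : a ∈ U := by
    refine ⟨haV, ?_⟩
    simp only [Set.mem_preimage, Set.mem_compl_iff, Set.mem_singleton_iff]
    rw [hQa]
    exact neg_ne_zero.mpr haa
  have hUV : U ⊆ V := Set.inter_subset_left
  have hQU : ∀ ω ∈ U, Q ω ≠ 0 := fun ω hω => hω.2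
  -- F is smooth on U
  have hFc : ContDiffOn ℝ (⊤ : ℕ∞) F U :=
    (hPc.mono hUV).div (hQc.mono hUV) hQU
  -- derivative of F at a
  have hAd : HasDerivAt A (deriv A a) a :=
    (((hAc.contDiffAt (hVopen.mem_nhds haV)).differentiableAt (by simp))).hasDerivAt
  have hBd : HasDerivAt B (deriv B a) a :=
    (((hBc.contDiffAt (hVopen.mem_nhds haV)).differentiableAt (by simp))).hasDerivAt
  have h1 : HasDerivAt (fun ω : ℝ => a - ω) (-1) a := by
    simpa using (hasDerivAt_id a).const_sub a
  have hPd : HasDerivAt P 0 a := by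
    have h2 := ((h1.pow 2).const_mul (n:ℝ)).mul hAd
    have h3 := h2.sub_const (a^2)
    refine h3.congr_deriv ?_
    simp
  have hQd : HasDerivAt Q (-(n:ℝ) * B a) a := by
    have h2 := (h1.const_mul (n:ℝ)).mul hBd
    have h3 := h2.sub_const a
    refine h3.congr_deriv ?_
    simp
  have hPa : P a = -a^2 := by simp [hP]
  have hQne : Q a ≠ 0 := by rw [hQa]; exact neg_ne_zero.mpr haa
  have hFd : HasDerivAt F (-(n:ℝ) * B a) a := by
    have := hPd.div hQd hQne
    refine this.congr_deriv ?_
    rw [hPa, hQa]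
    field_simp
    ring
  -- continuity of deriv F at a
  have hdc : ContinuousOn (deriv F) U :=
    hFc.continuousOn_deriv_of_isOpen hUopen (mod_cast le_top)
  have hTendF : Tendsto (deriv F) (𝓝[≠] a) (𝓝 (-(n:ℝ) * B a)) := by
    have h := (hdc.continuousAt (hUopen.mem_nhds haU)).tendsto
    rw [hFd.deriv] at h
    exact h.mono_left nhdsWithin_le_nhds
  -- pointwise identity on U \ {a}
  have key : ∀ ω ∈ U, ω ≠ a → (ω - a)^2 * g ω = F ω := by
    intro ω hωU hωa
    have hu : a - ω ≠ 0 := sub_ne_zero.mpr (Ne.symm hωa)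
    have hks := hVmem ω (hUV hωU)
    have hQω := hQU ω hωU
    rw [hg ω]
    have hsplit1 : (∑ k, s k / (s k - ω))
        = a/(a - ω) + ∑ k ∈ Finset.univ.erase j, s k/(s k - ω) := by
      rw [← Finset.add_sum_erase Finset.univ _ (Finset.mem_univ j)]
    have hsplit2 : (∑ k, (s k)^2 / (s k - ω)^2)
        = a^2/(a - ω)^2 + ∑ k ∈ Finset.univ.erase j, (s k)^2/(s k - ω)^2 := by
      rw [← Finset.add_sum_erase Finset.univ _ (Finset.mem_univ j)]
    rw [hsplit1, hsplit2]
    simp only [hF, hP, hQ, hA, hB]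
    set SB := ∑ k ∈ Finset.univ.erase j, s k/(s k - ω) with hSB
    set SA := ∑ k ∈ Finset.univ.erase j, (s k)^2/(s k - ω)^2 with hSA
    have hid : (1 - (1/(n:ℝ)) * (a/(a - ω) + SB)) * ((n:ℝ) * (a - ω))
        = (n:ℝ) * (a - ω) * (1 - (1/(n:ℝ)) * SB) - a := by
      field_simp
      ring
    have hDne : (1 - (1/(n:ℝ)) * (a/(a - ω) + SB)) ≠ 0 := by
      intro h
      apply hQω
      simp only [hQ]
      rw [← hid, h, zero_mul]
    have hQω' : (n:ℝ) * (a - ω) * (1 - (1/(n:ℝ)) * SB) - a ≠ 0 := by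
      have h := hQω
      simp only [hQ, hB] at h
      rwa [← hSB] at h
    have hnum : (n:ℝ) * (a - ω)^2 * (1 - (1/(n:ℝ)) * SA) - a^2
        = ((n:ℝ) * (a - ω)) * ((a - ω) * (1 - (1/(n:ℝ)) * (a^2/(a - ω)^2 + SA))) := by
      field_simp
      ring
    have hden : (n:ℝ) * (a - ω) * (1 - (1/(n:ℝ)) * SB) - a
        = ((n:ℝ) * (a - ω)) * (1 - (1/(n:ℝ)) * (a/(a - ω) + SB)) := by
      rw [← hid]; ring
    rw [hnum, hden, mul_div_mul_left _ _ (mul_ne_zero hn' hu)]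
    rw [show ((ω - a)^2 : ℝ) = (a - ω) * (a - ω) by ring, div_mul_div_comm, one_mul,
      ← mul_div_assoc,
      show (a - ω) * (a - ω) * (1 - 1/(n:ℝ) * (a^2/(a - ω)^2 + SA))
        = (a - ω) * ((a - ω) * (1 - 1/(n:ℝ) * (a^2/(a - ω)^2 + SA))) by ring,
      mul_div_mul_left _ _ hu]
  -- eventual equality of derivatives
  have hEq : deriv F =ᶠ[𝓝[≠] a] deriv (fun ω : ℝ => (ω - a)^2 * g ω) := by
    have hU' : IsOpen (U ∩ {a}ᶜ) := hUopen.inter isOpen_compl_singleton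
    have hmem : U ∩ {a}ᶜ ∈ 𝓝[≠] a :=
      Filter.inter_mem (mem_nhdsWithin_of_mem_nhds (hUopen.mem_nhds haU))
        self_mem_nhdsWithin
    filter_upwards [hmem] with ω hω
    have hloc : (fun ω : ℝ => (ω - a)^2 * g ω) =ᶠ[𝓝 ω] F := by
      filter_upwards [hU'.mem_nhds hω] with x hx
      exact key x hx.1 hx.2
    exact (hloc.deriv_eq).symm
  have hfinal : Tendsto (deriv fun ω : ℝ => (ω - a)^2 * g ω) (𝓝[≠] a)
      (𝓝 (-(n:ℝ) * B a)) := hTendF.congr' hEq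
  simpa [hB] using hfinal
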